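/- arXiv:1501.00123 — 5 statements merged into one kernel-verified Lean document; each statement's English description precedes it below -/
import Mathlib

section
/- Let Q ⊂ ℝ^m be the standard order-polytope simplex {0 ≤ v₁ ≤ v₂ ≤ ... ≤ v_m ≤ 1} and let λ(v) = ∑ c_i v_i be an integer linear form taking pairwise distinct values on the m+1 vertices of Q. Then the generating function G(q,z) = ∑_{N≥0} (∑_{x ∈ ℤ^m ∩ NQ} q^{λ(x)}) z^N, viewed as a formal power series in z over ℚ(q), equals a rational function whose denominator is ∏_{w ∈ V(Q)} (1 - q^{λ(w)} z), where V(Q) is the vertex set of Q. -/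
/-!
Splitting off the last coordinate `t` of a weakly increasing lattice point of `NQ` leaves one of
`tQ'`, where `Q'` is the order simplex one dimension lower, so `W(N) = ∑_{t ≤ N} q^{c t} W'(t)`
with `c` the last coefficient, i.e. `G(z) (1 - z) = G'(q^c z)`. The vertices of `Q` are the
vertices of `Q'` with a coordinate `1` appended, whose values are shifted by `c`, and the origin,
of value `0`. Induction on the dimension therefore gives `G(z) ∏_w (1 - q^{λ(w)} z) = 1`.
-/

open Finset PowerSeries

theorem zpow_sum₀ {G ι : Type*} [CommGroupWithZero G] {a : G} (ha : a ≠ 0) (s : Finset ι)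
    (f : ι → ℤ) : a ^ ∑ i ∈ s, f i = ∏ i ∈ s, a ^ f i := by
  classical
  induction s using Finset.induction_on with
  | empty => simp
  | insert i s hi ih => rw [sum_insert hi, prod_insert hi, zpow_add₀ ha, ih]

theorem Fin.monotone_snoc_iff {α : Type*} [Preorder α] {n : ℕ} {f : Fin n → α} {a : α} :
    Monotone (Fin.snoc f a : Fin (n + 1) → α) ↔ Monotone f ∧ ∀ i, f i ≤ a := by
  refine ⟨fun h => ⟨fun i j hij => ?_, fun i => ?_⟩, fun ⟨hf, ha⟩ i j hij => ?_⟩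
  · simpa using h (Fin.castSucc_le_castSucc_iff.2 hij)
  · simpa using h (Fin.le_last i.castSucc)
  · induction j using Fin.lastCases with
    | last =>
      induction i using Fin.lastCases with
      | last => simp
      | cast i => simpa using ha i
    | cast j =>
      induction i using Fin.lastCases with
      | last => exact absurd hij (by simp)
      | cast i => simpa using hf (Fin.castSucc_le_castSucc_iff.1 hij)

section PowerSeries

variable {R : Type*} [CommRing R]

theorem mk_sum_range_mul_one_sub_X (f : ℕ → R) :
    PowerSeries.mk (fun N => ∑ t ∈ range (N + 1), f t) * (1 - X) = PowerSeries.mk f := by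
  have hpartial :
      PowerSeries.mk (fun N => ∑ t ∈ range (N + 1), f t) = PowerSeries.mk f * PowerSeries.mk 1 := by
    ext N
    simp [coeff_mul, Nat.sum_antidiagonal_eq_sum_range_succ_mk]
  rw [hpartial, mul_assoc, mk_one_mul_one_sub_eq_one, mul_one]

theorem rescale_one_sub_C_mul_X (a b : R) : rescale a (1 - C b * X) = 1 - C (b * a) * X := by
  have hC : rescale a (C b) = C b := by
    ext n
    rcases n with _ | n <;> simp [coeff_rescale, coeff_C]
  rw [map_sub, map_one, map_mul, rescale_X, hC, ← mul_assoc, ← map_mul]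

end PowerSeries

def monotoneTuples (m N : ℕ) : Finset (Fin m → ℕ) :=
  {x ∈ Fintype.piFinset fun _ => range (N + 1) | Monotone x}

theorem mem_monotoneTuples {m N : ℕ} {y : Fin m → ℕ} :
    y ∈ monotoneTuples m N ↔ (∀ i, y i ≤ N) ∧ Monotone y := by
  simp [monotoneTuples]

theorem snoc_mem_monotoneTuples {m N t : ℕ} {y : Fin m → ℕ} :
    (Fin.snoc y t : Fin (m + 1) → ℕ) ∈ monotoneTuples (m + 1) N ↔
      t ≤ N ∧ y ∈ monotoneTuples m t := by
  simp only [mem_monotoneTuples, Fin.forall_fin_succ', Fin.snoc_castSucc, Fin.snoc_last,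
    Fin.monotone_snoc_iff]
  exact ⟨fun ⟨⟨_, htN⟩, hy, hyt⟩ => ⟨htN, hyt, hy⟩,
    fun ⟨htN, hyt, hy⟩ => ⟨⟨fun i => (hyt i).trans htN, htN⟩, hy, hyt⟩⟩

theorem sum_monotoneTuples_succ {M : Type*} [AddCommMonoid M] (m N : ℕ)
    (f : (Fin (m + 1) → ℕ) → M) :
    ∑ x ∈ monotoneTuples (m + 1) N, f x =
      ∑ t ∈ range (N + 1), ∑ y ∈ monotoneTuples m t, f (Fin.snoc y t) := by
  rw [sum_sigma']
  symm
  refine sum_nbij' (fun p : (_ : ℕ) × (Fin m → ℕ) => Fin.snoc p.2 p.1)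
    (fun x => ⟨x (Fin.last m), Fin.init (α := fun _ => ℕ) x⟩) ?_ ?_ ?_ ?_ fun _ _ => rfl
  · rintro ⟨t, y⟩ h
    simp only [mem_sigma, mem_range, Nat.lt_succ_iff] at h
    exact snoc_mem_monotoneTuples.2 h
  · intro x hx
    rw [← Fin.snoc_init_self x, snoc_mem_monotoneTuples] at hx
    simpa [Nat.lt_succ_iff] using hx
  · rintro ⟨t, y⟩ _
    simp
  · intro x _
    simp

theorem sum_monotone_fin_eq_sum_monotoneTuples {M : Type*} [AddCommMonoid M] (m N : ℕ)
    (f : (Fin m → ℕ) → M) :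
    ∑ x ∈ univ.filter (fun x : Fin m → Fin (N + 1) => Monotone x), f (fun i => x i) =
      ∑ y ∈ monotoneTuples m N, f y := by
  refine sum_nbij' (fun x i => x i) (fun y i => Fin.ofNat (N + 1) (y i)) ?_ ?_ ?_ ?_
    fun _ _ => rfl
  · intro x hx
    exact mem_monotoneTuples.2 ⟨fun i => Nat.lt_succ_iff.1 (x i).isLt,
      Fin.val_strictMono.monotone.comp (mem_filter.1 hx).2⟩
  · intro y hy
    rw [mem_monotoneTuples] at hy
    refine mem_filter.2 ⟨mem_univ _, fun i j hij => ?_⟩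
    simp only [Fin.le_iff_val_le_val, Fin.val_ofNat, Nat.mod_eq_of_lt (Nat.lt_succ_of_le (hy.1 _))]
    exact hy.2 hij
  · intro x _
    simp
  · intro y hy
    funext i
    simp [Nat.mod_eq_of_lt (Nat.lt_succ_of_le ((mem_monotoneTuples.1 hy).1 i))]

section OrderSimplex

variable {R : Type*} [CommRing R]

/- For `a i = q ^ c i`, `orderSimplexSum a N` is `W_λ(NQ, q)` and `vertexWeight a k` is
`q ^ λ(v^k)`. -/
def orderSimplexSum {m : ℕ} (a : Fin m → R) (N : ℕ) : R :=
  ∑ x ∈ monotoneTuples m N, ∏ i, a i ^ x i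

def vertexWeight {m : ℕ} (a : Fin m → R) (k : Fin (m + 1)) : R :=
  ∏ i ∈ univ.filter (fun i : Fin m => (k : ℕ) ≤ i), a i

theorem orderSimplexSum_fin_zero (a : Fin 0 → R) : orderSimplexSum a = 1 := by
  ext N
  simp [orderSimplexSum, monotoneTuples, Subsingleton.monotone]

theorem orderSimplexSum_succ {m : ℕ} (a : Fin (m + 1) → R) (N : ℕ) :
    orderSimplexSum a N =
      ∑ t ∈ range (N + 1), a (Fin.last m) ^ t * orderSimplexSum (Fin.init a) t := by
  rw [orderSimplexSum, sum_monotoneTuples_succ]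
  refine sum_congr rfl fun t _ => ?_
  rw [orderSimplexSum, mul_sum]
  refine sum_congr rfl fun y _ => ?_
  rw [Fin.prod_univ_castSucc, mul_comm]
  simp [Fin.init]

theorem vertexWeight_last {m : ℕ} (a : Fin m → R) : vertexWeight a (Fin.last m) = 1 :=
  prod_eq_one fun i hi => absurd (mem_filter.1 hi).2 (not_le.2 i.isLt)

theorem vertexWeight_castSucc {m : ℕ} (a : Fin (m + 1) → R) (k : Fin (m + 1)) :
    vertexWeight a k.castSucc = vertexWeight (Fin.init a) k * a (Fin.last m) := by
  simp only [vertexWeight, prod_filter, Fin.prod_univ_castSucc, Fin.val_castSucc, Fin.val_last]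
  rw [if_pos (by omega)]
  rfl

theorem mk_orderSimplexSum_mul_prod_vertexWeight {m : ℕ} (a : Fin m → R) :
    PowerSeries.mk (orderSimplexSum a) * ∏ k : Fin (m + 1), (1 - C (vertexWeight a k) * X) =
      1 := by
  induction m with
  | zero => simpa [orderSimplexSum_fin_zero, vertexWeight] using mk_one_mul_one_sub_eq_one R
  | succ m ih =>
    set b := a (Fin.last m)
    have hrec : PowerSeries.mk (orderSimplexSum a) =
        PowerSeries.mk fun N => ∑ t ∈ range (N + 1), b ^ t * orderSimplexSum (Fin.init a) t :=
      congrArg _ (funext (orderSimplexSum_succ a))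
    calc PowerSeries.mk (orderSimplexSum a) * ∏ k : Fin (m + 2), (1 - C (vertexWeight a k) * X)
        = (PowerSeries.mk (orderSimplexSum a) * (1 - X)) *
            rescale b (∏ k : Fin (m + 1), (1 - C (vertexWeight (Fin.init a) k) * X)) := by
          rw [Fin.prod_univ_castSucc, vertexWeight_last, map_prod]
          simp only [vertexWeight_castSucc, rescale_one_sub_C_mul_X, map_one, one_mul]
          ring
      _ = rescale b (PowerSeries.mk (orderSimplexSum (Fin.init a)) *
            ∏ k : Fin (m + 1), (1 - C (vertexWeight (Fin.init a) k) * X)) := by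
          rw [hrec, mk_sum_range_mul_one_sub_X, ← rescale_mk, map_mul]
      _ = 1 := by rw [ih, map_one]

end OrderSimplex

theorem generating_function_order_simplex_rational_general (m : ℕ) (c : Fin m → ℤ)
    (L : Fin (m + 1) → ℤ)
    (hL : ∀ k : Fin (m + 1), L k = ∑ i ∈ Finset.univ.filter (fun i : Fin m => (k : ℕ) ≤ (i : ℕ)), c i)
    (W : ℕ → RatFunc ℚ)
    (hW : ∀ N : ℕ, W N =
      ∑ x ∈ Finset.univ.filter
          (fun x : Fin m → Fin (N + 1) => ∀ i j : Fin m, i ≤ j → x i ≤ x j),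
        (RatFunc.X : RatFunc ℚ) ^ (∑ i : Fin m, c i * (x i : ℤ))) :
    ∃ Num : Polynomial (RatFunc ℚ),
      (PowerSeries.mk W) *
          ∏ k : Fin (m + 1),
            (1 - PowerSeries.C ((RatFunc.X : RatFunc ℚ) ^ (L k)) * PowerSeries.X) =
        (Num : PowerSeries (RatFunc ℚ)) := by
  set a : Fin m → RatFunc ℚ := fun i => RatFunc.X ^ c i
  have hW_eq : W = orderSimplexSum a := funext fun N => by
    rw [hW, orderSimplexSum, ← sum_monotone_fin_eq_sum_monotoneTuples]
    refine sum_congr rfl fun x _ => ?_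
    rw [zpow_sum₀ RatFunc.X_ne_zero]
    exact prod_congr rfl fun i _ => by rw [zpow_mul, zpow_natCast]
  have hL_eq : ∀ k, (RatFunc.X : RatFunc ℚ) ^ L k = vertexWeight a k := fun k => by
    rw [hL, zpow_sum₀ RatFunc.X_ne_zero, vertexWeight]
  refine ⟨1, ?_⟩
  simp only [hW_eq, hL_eq, Polynomial.coe_one]
  exact mk_orderSimplexSum_mul_prod_vertexWeight a

/-- For the order simplex `Q = {0 ≤ v₁ ≤ ⋯ ≤ v_m ≤ 1}` and an integer
linear form `λ(v) = ∑ c_i v_i` taking pairwise distinct values on the `m+1` vertices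
`v^k` of `Q` (where `λ(v^k) = ∑_{i ≥ k} c_i`), the generating function
`G(q,z) = ∑_{N ≥ 0} W_λ(NQ, q) z^N` (a power series in `z` over `ℚ(q)`) is a rational
function with denominator `∏_{w ∈ V(Q)} (1 - q^{λ(w)} z)`. -/
theorem generating_function_order_simplex_rational (m : ℕ) (c : Fin m → ℤ)
    (L : Fin (m + 1) → ℤ)
    (hL : ∀ k : Fin (m + 1), L k = ∑ i ∈ Finset.univ.filter (fun i : Fin m => (k : ℕ) ≤ (i : ℕ)), c i)
    (hdist : Function.Injective L)
    (W : ℕ → RatFunc ℚ)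
    (hW : ∀ N : ℕ, W N =
      ∑ x ∈ Finset.univ.filter
          (fun x : Fin m → Fin (N + 1) => ∀ i j : Fin m, i ≤ j → x i ≤ x j),
        (RatFunc.X : RatFunc ℚ) ^ (∑ i : Fin m, c i * (x i : ℤ))) :
    ∃ Num : Polynomial (RatFunc ℚ),
      (PowerSeries.mk W) *
          ∏ k : Fin (m + 1),
            (1 - PowerSeries.C ((RatFunc.X : RatFunc ℚ) ^ (L k)) * PowerSeries.X) =
        (Num : PowerSeries (RatFunc ℚ)) :=
  generating_function_order_simplex_rational_general m c L hL W hW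
end

section
/- Let Q = {(v₁,v₂) ∈ [0,1]² : v₁ ≤ v₂} with λ(v₁,v₂) = v₁ − v₂. Define E(a,b,q) = (a^{−1} − 2q − bq + q² + bq²)/(1−q)². Then for every natural number N ≥ 1, the sum of q^{x₁−x₂} over the interior integer points of NQ, i.e. the integer points (x₁,x₂) with 1 ≤ x₁ < x₂ ≤ N−1, equals E(q^N, −N, q^{−1}). -/
open Finset

lemma inner_geom (y : RatFunc ℚ) :
    ∀ N : ℕ, 1 ≤ N → (∑ x₁ ∈ Finset.Ioo 0 N, y ^ (N - x₁)) * (1 - y) = y - y ^ N := by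
  intro N hN
  induction N, hN using Nat.le_induction with
  | base =>
    have h01 : Finset.Ioo 0 1 = (∅ : Finset ℕ) := rfl
    simp [h01]
  | succ N hN ih =>
    have hins : Finset.Ioo 0 (N + 1) = insert N (Finset.Ioo 0 N) := by
      ext x; simp; omega
    have hnm : N ∉ Finset.Ioo 0 N := by simp
    rw [hins, Finset.sum_insert hnm]
    have hshift : ∑ x₁ ∈ Finset.Ioo 0 N, y ^ (N + 1 - x₁)
        = y * ∑ x₁ ∈ Finset.Ioo 0 N, y ^ (N - x₁) := by
      rw [Finset.mul_sum]
      refine Finset.sum_congr rfl fun x hx => ?_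
      have hx' : x < N := (Finset.mem_Ioo.mp hx).2
      have : N + 1 - x = (N - x) + 1 := by omega
      rw [this, pow_succ]; ring
    rw [hshift]
    have hNN : N + 1 - N = 1 := by omega
    rw [hNN]
    linear_combination y * ih

lemma double_sum_closed (y : RatFunc ℚ) :
    ∀ N : ℕ, 1 ≤ N →
    (∑ x₂ ∈ Finset.range N, ∑ x₁ ∈ Finset.Ioo 0 x₂, y ^ (x₂ - x₁)) * (1 - y) ^ 2
      = y ^ N + ((N : RatFunc ℚ) - 2) * y - ((N : RatFunc ℚ) - 1) * y ^ 2 := by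
  intro N hN
  induction N, hN using Nat.le_induction with
  | base => simp; ring
  | succ N hN ih =>
    rw [Finset.sum_range_succ, add_mul, ih]
    have h2 : (∑ x₁ ∈ Finset.Ioo 0 N, y ^ (N - x₁)) * (1 - y) ^ 2
        = (y - y ^ N) * (1 - y) := by
      rw [sq, ← mul_assoc, inner_geom y N hN]
    rw [h2]
    push_cast
    ring

/-- q-Ehrhart reciprocity for the triangle `Q = {0 ≤ v₁ ≤ v₂ ≤ 1}` with
`λ(v₁,v₂) = v₁ - v₂`.  With `E(a,b,q) = (a⁻¹ - 2q - bq + q² + bq²)/(1-q)²`, for every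
`N ≥ 1` the sum of `q^(x₁-x₂)` over the interior lattice points `0 < x₁ < x₂ < N` of
the dilate `NQ` equals `E(q^N, -N, q⁻¹)`. -/
theorem qEhrhart_reciprocity_triangle
    (E : RatFunc ℚ → RatFunc ℚ → RatFunc ℚ → RatFunc ℚ)
    (hE : ∀ a b q : RatFunc ℚ,
      E a b q = (a⁻¹ - 2 * q - b * q + q ^ 2 + b * q ^ 2) / (1 - q) ^ 2)
    (N : ℕ) (hN : 1 ≤ N) :
    ∑ x₂ ∈ Finset.range N, ∑ x₁ ∈ Finset.Ioo 0 x₂,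
        (RatFunc.X : RatFunc ℚ) ^ ((x₁ : ℤ) - (x₂ : ℤ)) =
      E ((RatFunc.X : RatFunc ℚ) ^ N) (-(N : RatFunc ℚ)) (RatFunc.X : RatFunc ℚ)⁻¹ := by
  set y : RatFunc ℚ := (RatFunc.X : RatFunc ℚ)⁻¹ with hy
  have hX1 : (RatFunc.X : RatFunc ℚ) ≠ 1 := by
    intro h
    have : (Polynomial.X : Polynomial ℚ) = 1 := by
      apply RatFunc.algebraMap_injective ℚ
      rw [RatFunc.algebraMap_X, map_one]; exact h
    simpa using congrArg Polynomial.natDegree this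
  have hy1 : (1 : RatFunc ℚ) - y ≠ 0 := by
    intro h
    have hy' : (RatFunc.X : RatFunc ℚ)⁻¹ = 1 := by
      rw [← hy]; exact (sub_eq_zero.mp h).symm
    exact hX1 (inv_eq_one.mp hy')
  have hLHS : ∑ x₂ ∈ Finset.range N, ∑ x₁ ∈ Finset.Ioo 0 x₂,
      (RatFunc.X : RatFunc ℚ) ^ ((x₁ : ℤ) - (x₂ : ℤ))
      = ∑ x₂ ∈ Finset.range N, ∑ x₁ ∈ Finset.Ioo 0 x₂, y ^ (x₂ - x₁) := by
    refine Finset.sum_congr rfl fun x₂ _ => Finset.sum_congr rfl fun x₁ hx₁ => ?_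
    have hlt : x₁ < x₂ := (Finset.mem_Ioo.mp hx₁).2
    have hz : (x₁ : ℤ) - (x₂ : ℤ) = -((x₂ - x₁ : ℕ) : ℤ) := by omega
    rw [hz, zpow_neg, zpow_natCast, ← inv_pow, hy]
  rw [hLHS, hE]
  rw [eq_div_iff (pow_ne_zero 2 hy1)]
  rw [double_sum_closed y N hN]
  have hinv : ((RatFunc.X : RatFunc ℚ) ^ N)⁻¹ = y ^ N := by rw [hy, inv_pow]
  rw [hinv]
  ring
end

section
/- Let X be a finite poset. The order polytope P_X is the union, over all linear extensions σ of the partial order on X, of the order polytopes P_{X,σ} of the corresponding linear orders, and the interiors of these simplices are pairwise disjoint; in particular the simplices P_{X,σ} form a triangulation of P_X. -/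
/-!
Given `v ∈ P_X`, sorting `X` by `v`, with ties broken by any linear extension of `≤`, gives a
linear extension `σ` with `v ∈ P_{X,σ}`. Conversely, at an interior point `u` of `P_{X,σ}` every
inequality `u x ≤ u y` with `σ x < σ y` is strict (otherwise `u` could be pushed out of the
simplex by increasing `u x`), so `u` recovers `σ`, and an interior point of two simplices forces
them to coincide.
-/

open Filter Topology

theorem exists_equiv_fin_le_iff_of_injective {X β : Type*} [Fintype X] [LinearOrder β]
    {f : X → β} (hf : Function.Injective f) :
    ∃ e : X ≃ Fin (Fintype.card X), ∀ x y, e x ≤ e y ↔ f x ≤ f y := by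
  let o := Fintype.orderIsoFinOfCardEq (Set.range f) (Set.card_range_of_injective hf)
  exact ⟨(Equiv.ofInjective f hf).trans o.symm.toEquiv, fun x y => o.symm.le_iff_le⟩

theorem exists_linearExtension_fin_of_monotone {X α : Type*} [Fintype X] [PartialOrder X]
    [LinearOrder α] {v : X → α} (hv : Monotone v) :
    ∃ e : X ≃ Fin (Fintype.card X), Monotone e ∧ ∀ x y, e x ≤ e y → v x ≤ v y := by
  let f : X → α ×ₗ LinearExtension X := fun x => toLex (v x, toLinearExtension x)
  have hf : Function.Injective f := fun x y h => congrArg (fun p => (ofLex p).2) h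
  obtain ⟨e, he⟩ := exists_equiv_fin_le_iff_of_injective hf
  refine ⟨e, fun x y hxy => (he x y).2 ?_, fun x y hxy => ?_⟩
  · exact Prod.Lex.toLex_mono (hv.prodMk toLinearExtension.monotone hxy)
  · exact Prod.Lex.monotone_fst_ofLex ((he x y).1 hxy)

theorem lt_of_mem_interior_setOf_le {X : Type*} {x y : X} (hxy : x ≠ y) {u : X → ℝ}
    (hu : u ∈ interior {w : X → ℝ | w x ≤ w y}) : u x < u y := by
  classical
  have hpush : Tendsto (fun t : ℝ => u + t • Pi.single x 1) (𝓝[>] 0) (𝓝 u) := by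
    refine Tendsto.mono_left ?_ nhdsWithin_le_nhds
    have hcont : Continuous fun t : ℝ => u + t • Pi.single x 1 := by fun_prop
    simpa using hcont.tendsto 0
  obtain ⟨t, hle, ht⟩ :=
    ((hpush.eventually_mem (mem_interior_iff_mem_nhds.1 hu)).and self_mem_nhdsWithin).exists
  simp only [Set.mem_ofPred_eq, Pi.add_apply, Pi.smul_apply, Pi.single_eq_same,
    Pi.single_eq_of_ne' hxy, smul_eq_mul, mul_one] at hle
  linarith [show 0 < t from ht]

theorem lt_iff_lt_of_mem_interior {X α : Type*} [LinearOrder α] {e : X → α} {S : Set (X → ℝ)}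
    (hS : ∀ v ∈ S, ∀ x y, e x ≤ e y → v x ≤ v y) {u : X → ℝ} (hu : u ∈ interior S) (x y : X) :
    e x < e y ↔ u x < u y := by
  refine ⟨fun h => lt_of_mem_interior_setOf_le (ne_of_apply_ne e h.ne)
    (interior_mono (fun v hv => hS v hv x y h.le) hu), fun h => ?_⟩
  by_contra! hyx
  exact h.not_ge (hS u (interior_subset hu) y x hyx)

theorem Equiv.eq_of_lt_iff_lt {X α : Type*} [LinearOrder α] [WellFoundedLT α] {e e' : X ≃ α}
    (h : ∀ x y, e x < e y ↔ e' x < e' y) : e = e' := by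
  let o : α ≃o α := OrderIso.ofRelIsoLT ⟨e.symm.trans e', fun {a b} => by
    simpa using (h (e.symm a) (e.symm b)).symm⟩
  have ho : o = OrderIso.refl α := Subsingleton.elim _ _
  exact Equiv.ext fun x => by simpa [o] using (DFunLike.congr_fun ho (e x)).symm

/-- For a finite poset `X`, the order polytope `P_X` is the union of the
simplices `P_{X,σ}` over all linear extensions `σ` of the partial order (encoded as
order-preserving bijections `e : X ≃ Fin |X|`), and the interiors of these simplices
are pairwise disjoint; i.e. the `P_{X,σ}` triangulate `P_X`. -/
theorem order_polytope_triangulation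
    (X : Type*) [Fintype X] [PartialOrder X]
    (P : (X ≃ Fin (Fintype.card X)) → Set (X → ℝ))
    (hP : ∀ e, P e = {v : X → ℝ |
        (∀ x x' : X, e x ≤ e x' → v x ≤ v x') ∧ ∀ x, v x ∈ Set.Icc (0 : ℝ) 1}) :
    ({v : X → ℝ | (∀ x x' : X, x ≤ x' → v x ≤ v x') ∧ ∀ x, v x ∈ Set.Icc (0 : ℝ) 1} =
        ⋃ e ∈ {e : X ≃ Fin (Fintype.card X) | ∀ x x' : X, x ≤ x' → e x ≤ e x'}, P e) ∧
      Set.Pairwise {e : X ≃ Fin (Fintype.card X) | ∀ x x' : X, x ≤ x' → e x ≤ e x'}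
        (fun e e' => Disjoint (interior (P e)) (interior (P e'))) := by
  obtain rfl := funext hP
  refine ⟨?_, fun e _ e' _ hne => Set.disjoint_left.2 fun u hu hu' => hne ?_⟩
  · ext v
    simp only [Set.mem_ofPred_eq, Set.mem_iUnion, exists_prop]
    constructor
    · rintro ⟨hv, hIcc⟩
      obtain ⟨e, he, hve⟩ := exists_linearExtension_fin_of_monotone (fun x y h => hv x y h)
      exact ⟨e, fun x y h => he h, hve, hIcc⟩
    · rintro ⟨e, he, hve, hIcc⟩
      exact ⟨fun x y h => hve x y (he x y h), hIcc⟩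
  · refine Equiv.eq_of_lt_iff_lt fun x y => ?_
    rw [lt_iff_lt_of_mem_interior (fun v hv => hv.1) hu,
      lt_iff_lt_of_mem_interior (fun v hv => hv.1) hu']
end

section
/- Partial fraction degree bound: let e₀ > e₁ > ... > e_k be integers and m₀,...,m_k positive integers, and write ∏_{j=0}^{k} (1 − q^{e_j} z)^{−m_j} = ∑_{j=0}^{k} ∑_{i=1}^{m_j} C_{ij}(q) (1 − q^{e_j} z)^{−i} as the partial fraction decomposition with respect to z over the field ℚ(q). Then each coefficient C_{ij}(q) ∈ ℚ(q), when expanded as a Laurent series in q^{−1}, has maximal q-degree at most e_j − e₀. -/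
/-!
Expand around the pole `z = q^{-e_j}`, i.e. substitute `z = q^{-e_j} (1 - w)`. The factor
`1 - q^{e_l} z` becomes `(1 - q^{a_l}) + q^{a_l} w` with `a_l = e_l - e_j`, which is `w` for `l = j`
and a unit power series for `l ≠ j`. Multiplying the decomposition by `w^{m_j}` shows that
`C_{ji}` is the coefficient of `w^{m_j - 1 - i}` in `∏_{l ≠ j} ((1 - q^{a_l}) + q^{a_l} w)^{-m_l}`.
The `n`-th coefficient of `((1 - q^a) + q^a w)⁻¹` is `(1 - q^a)^{-(n+1)} (-q^a)^n`, whose valuation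
at infinity is at most that of `q^{-max(a, 0)}`. In the product of these bounds, the factor `l = 0`
contributes `q^{e_j - e_0}` (if `j ≠ 0`) and every other factor at most `1`.
-/

open Finset Polynomial PowerSeries LaurentSeries

namespace PowerSeries

section Valuation

variable {R Γ₀ : Type*} [CommRing R] [LinearOrderedCommMonoidWithZero Γ₀] (v : Valuation R Γ₀)

theorem valuation_coeff_mul_le {f g : R⟦X⟧} {γ δ : Γ₀} (hf : ∀ n, v (coeff n f) ≤ γ)
    (hg : ∀ n, v (coeff n g) ≤ δ) (n : ℕ) : v (coeff n (f * g)) ≤ γ * δ := by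
  rw [coeff_mul]
  exact v.map_sum_le fun p _ => (v.map_mul _ _).trans_le (mul_le_mul' (hf _) (hg _))

theorem valuation_coeff_one_le (n : ℕ) : v (coeff n (1 : R⟦X⟧)) ≤ 1 := by
  rw [coeff_one]
  split_ifs <;> simp

theorem valuation_coeff_prod_le {ι : Type*} (s : Finset ι) {f : ι → R⟦X⟧} {γ : ι → Γ₀}
    (hf : ∀ l ∈ s, ∀ n, v (coeff n (f l)) ≤ γ l) (n : ℕ) :
    v (coeff n (∏ l ∈ s, f l)) ≤ ∏ l ∈ s, γ l := by
  classical
  induction s using Finset.induction_on generalizing n with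
  | empty => simpa using valuation_coeff_one_le v n
  | insert l s hl ih =>
    rw [prod_insert hl, prod_insert hl]
    exact valuation_coeff_mul_le v (hf l (mem_insert_self l s))
      (ih fun l' hl' => hf l' (mem_insert_of_mem hl')) n

theorem valuation_coeff_pow_le {f : R⟦X⟧} {γ : Γ₀} (hf : ∀ n, v (coeff n f) ≤ γ) (k n : ℕ) :
    v (coeff n (f ^ k)) ≤ γ ^ k := by
  simpa using valuation_coeff_prod_le v (range k) (fun _ _ => hf) n

end Valuation

section Field

variable {K : Type*} [Field K]

theorem inv_C_add_C_mul_X {c : K} (hc : c ≠ 0) (d : K) :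
    (C c + C d * X)⁻¹ = mk fun n => c⁻¹ ^ (n + 1) * (-d) ^ n := by
  refine ((eq_inv_iff_mul_eq_one (by simpa using hc)).mpr ?_).symm
  ext (_ | n)
  · simp [hc]
  · simp only [mul_add, ← mul_assoc, coeff_mul_C, coeff_succ_mul_X, coeff_mk, map_add, coeff_one,
      if_neg n.succ_ne_zero]
    linear_combination (c⁻¹ ^ (n + 1) * (-d) ^ (n + 1)) * mul_inv_cancel₀ hc

theorem valuation_coeff_inv_C_add_C_mul_X_le {Γ₀ : Type*} [LinearOrderedCommGroupWithZero Γ₀]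
    (v : Valuation K Γ₀) {c d : K} (hc : c ≠ 0) (hdc : v d ≤ v c) (n : ℕ) :
    v (coeff n (C c + C d * X)⁻¹) ≤ (v c)⁻¹ := by
  have hvc : 0 < v c := zero_lt_iff.mpr ((v.ne_zero_iff).mpr hc)
  rw [inv_C_add_C_mul_X hc, coeff_mk, map_mul, map_pow, map_pow, map_inv₀, v.map_neg,
    pow_succ', mul_assoc, ← mul_pow]
  refine mul_le_of_le_one_right' (pow_le_one' ?_ n)
  rwa [inv_mul_le_iff₀ hvc, mul_one]

theorem coeff_prod_erase_inv_pow_eq_of_partialFraction {ι : Type*} [Fintype ι] [DecidableEq ι]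
    (j : ι) (f : ι → K⟦X⟧) (hfj : f j = X) (hf : ∀ l ≠ j, constantCoeff (f l) ≠ 0)
    (m : ι → ℕ) (a : ι → ℕ → K)
    (h : ∏ l, ((f l : K⸨X⸩) ^ m l)⁻¹ =
      ∑ l, ∑ i ∈ range (m l), HahnSeries.C (a l i) * (f l : K⸨X⸩)⁻¹ ^ (i + 1))
    {i : ℕ} (hi : i < m j) :
    coeff (m j - 1 - i) (∏ l ∈ univ.erase j, (f l)⁻¹ ^ m l) = a j i := by
  set ψ := HahnSeries.ofPowerSeries ℤ K
  have hinv : ∀ l ≠ j, (ψ (f l))⁻¹ = ψ (f l)⁻¹ := fun l hl => (eq_inv_of_mul_eq_one_left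
    (by rw [← map_mul, PowerSeries.inv_mul_cancel _ (hf l hl), map_one])).symm
  have hX : ψ X ≠ 0 := by simp [ψ]
  set R := ∑ l ∈ univ.erase j, ∑ i ∈ range (m l), C (a l i) * (f l)⁻¹ ^ (i + 1) with hR
  have hprod : ψ (∏ l ∈ univ.erase j, (f l)⁻¹ ^ m l) = ∏ l ∈ univ.erase j, (ψ (f l) ^ m l)⁻¹ := by
    rw [map_prod]
    exact prod_congr rfl fun l hl => by rw [map_pow, ← hinv l (ne_of_mem_erase hl), inv_pow]
  have hpole : ψ (∑ i ∈ range (m j), C (a j i) * X ^ (m j - 1 - i)) =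
      (∑ i ∈ range (m j), HahnSeries.C (a j i) * (ψ X)⁻¹ ^ (i + 1)) * ψ X ^ m j := by
    rw [map_sum, sum_mul]
    refine sum_congr rfl fun i hi => ?_
    rw [map_mul, map_pow, coe_C, mul_assoc, show m j - 1 - i = m j - (i + 1) by omega,
      pow_sub₀ _ hX (by have := mem_range.mp hi; omega), inv_pow, mul_comm (ψ X ^ m j)]
  have hregular : ψ (X ^ m j * R) = (∑ l ∈ univ.erase j, ∑ i ∈ range (m l),
      HahnSeries.C (a l i) * (ψ (f l))⁻¹ ^ (i + 1)) * ψ X ^ m j := by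
    rw [map_mul, mul_comm, map_pow, hR, map_sum, sum_mul, sum_mul]
    refine sum_congr rfl fun l hl => ?_
    rw [map_sum, sum_mul, sum_mul]
    refine sum_congr rfl fun i _ => ?_
    rw [map_mul, map_pow, coe_C, hinv l (ne_of_mem_erase hl)]
  have hsplit : ∏ l ∈ univ.erase j, (f l)⁻¹ ^ m l =
      ∑ i ∈ range (m j), C (a j i) * X ^ (m j - 1 - i) + X ^ m j * R := by
    apply HahnSeries.ofPowerSeries_injective (Γ := ℤ)
    have h' := congrArg (· * ψ X ^ m j) h
    rw [← mul_prod_erase univ _ (mem_univ j), ← add_sum_erase univ _ (mem_univ j), hfj] at h'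
    rw [map_add, hprod, hpole, hregular, ← add_mul, ← h', mul_comm, ← mul_assoc,
      mul_inv_cancel₀ (pow_ne_zero _ hX), one_mul]
  rw [hsplit, map_add, coeff_X_pow_mul', if_neg (by omega), add_zero, map_sum,
    sum_eq_single_of_mem i (mem_range.mpr hi)]
  · simp
  · intro i' hi' _
    rw [coeff_C_mul_X_pow, if_neg (by have := mem_range.mp hi'; omega)]

end Field

end PowerSeries

theorem Polynomial.compRingHom_C_mul_one_sub_X_injective {R : Type*} [CommRing R] [IsDomain R]
    {b : R} (hb : b ≠ 0) : Function.Injective (compRingHom (C b * (1 - X)) : R[X] →+* R[X]) := by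
  refine (injective_iff_map_eq_zero _).mpr fun p hp => ?_
  refine (comp_eq_zero_iff.mp hp).resolve_right fun ⟨_, hconst⟩ => hb ?_
  simpa [coeff_one] using congrArg (coeff · 1) hconst

namespace RatFunc

section Expansion

variable {K : Type*} [Field K] {b : K}

/-- The expansion of a rational function in powers of `w = 1 - X / b`. -/
noncomputable def expandAround (b : K) (hb : b ≠ 0) : RatFunc K →+* K⸨X⸩ :=
  liftRingHom ((HahnSeries.ofPowerSeries ℤ K).comp (coeToPowerSeries.ringHom.comp
      (compRingHom (Polynomial.C b * (1 - Polynomial.X)))))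
    (nonZeroDivisors_le_comap_nonZeroDivisors_of_injective _ <|
      (HahnSeries.ofPowerSeries_injective.comp (Polynomial.coe_injective K)).comp
        (compRingHom_C_mul_one_sub_X_injective hb))

theorem expandAround_algebraMap (hb : b ≠ 0) (p : K[X]) :
    expandAround b hb (algebraMap _ _ p) =
      ((p.comp (Polynomial.C b * (1 - Polynomial.X)) : K⟦X⟧) : K⸨X⸩) := by
  rw [expandAround, ← div_one (algebraMap _ _ p), ← map_one (algebraMap K[X] (RatFunc K)),
    liftRingHom_apply_div]
  simp

theorem expandAround_X (hb : b ≠ 0) :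
    expandAround b hb X = ((PowerSeries.C b * (1 - PowerSeries.X) : K⟦X⟧) : K⸨X⸩) := by
  rw [← algebraMap_X, expandAround_algebraMap]
  simp

theorem expandAround_C (hb : b ≠ 0) (c : K) : expandAround b hb (C c) = HahnSeries.C c := by
  rw [← algebraMap_C, expandAround_algebraMap]
  simp

theorem expandAround_one_sub_C_mul_X (hb : b ≠ 0) (c : K) :
    expandAround b hb (1 - C c * X) =
      ((PowerSeries.C (1 - c * b) + PowerSeries.C (c * b) * PowerSeries.X : K⟦X⟧) : K⸨X⸩) := by
  rw [map_sub, map_one, map_mul, expandAround_C, expandAround_X, ← PowerSeries.coe_C,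
    ← PowerSeries.coe_mul, ← PowerSeries.coe_one, ← PowerSeries.coe_sub]
  congr 1
  simp only [map_sub, map_one, map_mul]
  ring

end Expansion

variable {F : Type*} [Field F]

theorem expandAround_X_zpow_neg_one_sub_C_X_zpow_mul_X (d e : ℤ) :
    expandAround (X ^ (-d)) (zpow_ne_zero _ X_ne_zero) (1 - C ((X : RatFunc F) ^ e) * X) =
      ((PowerSeries.C (1 - X ^ (e - d)) + PowerSeries.C (X ^ (e - d)) * PowerSeries.X :
        (RatFunc F)⟦X⟧) : (RatFunc F)⸨X⸩) := by
  rw [expandAround_one_sub_C_mul_X, ← zpow_add₀ X_ne_zero, ← sub_eq_add_neg]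

theorem inftyValuation_one_sub_X_zpow [DecidableEq (RatFunc F)] {a : ℤ} (ha : a ≠ 0) :
    inftyValuation F (1 - X ^ a) = WithZero.exp (max a 0) := by
  rcases ha.lt_or_gt with ha | ha
  · have hlt : inftyValuation F (X ^ a) < 1 := by
      rwa [inftyValuation.X_zpow, ← WithZero.exp_zero, WithZero.exp_lt_exp]
    rw [Valuation.map_one_sub_of_lt _ hlt, max_eq_right ha.le, WithZero.exp_zero]
  · have hlt : inftyValuation F 1 < inftyValuation F (X ^ a) := by
      rwa [Valuation.map_one, inftyValuation.X_zpow, ← WithZero.exp_zero, WithZero.exp_lt_exp]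
    rw [Valuation.map_sub_eq_of_lt_right _ hlt, inftyValuation.X_zpow, max_eq_left ha.le]

theorem one_sub_X_zpow_ne_zero {a : ℤ} (ha : a ≠ 0) : (1 - X ^ a : RatFunc F) ≠ 0 := by
  classical
  rw [← (inftyValuation F).ne_zero_iff, inftyValuation_one_sub_X_zpow ha]
  exact WithZero.exp_ne_zero

theorem inftyValuation_coeff_inv_C_one_sub_X_zpow_add_le [DecidableEq (RatFunc F)] {a : ℤ}
    (ha : a ≠ 0) (n : ℕ) :
    inftyValuation F (PowerSeries.coeff n
      (PowerSeries.C (1 - X ^ a) + PowerSeries.C (X ^ a) * PowerSeries.X)⁻¹) ≤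
      WithZero.exp (-max a 0) := by
  have hv := inftyValuation_one_sub_X_zpow (F := F) ha
  rw [WithZero.exp_neg, ← hv]
  refine PowerSeries.valuation_coeff_inv_C_add_C_mul_X_le _ (one_sub_X_zpow_ne_zero ha) ?_ n
  rw [hv, inftyValuation.X_zpow, WithZero.exp_le_exp]
  exact le_max_left a 0

end RatFunc

theorem WithZero.exp_sum {ι M : Type*} [AddCommMonoid M] (s : Finset ι) (f : ι → M) :
    exp (∑ i ∈ s, f i) = ∏ i ∈ s, exp (f i) := by
  classical
  induction s using Finset.induction_on with
  | empty => simp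
  | insert a s ha ih => rw [sum_insert ha, prod_insert ha, exp_add, ih]

theorem sub_le_sum_erase_nsmul_max_sub {ι : Type*} [Fintype ι] [DecidableEq ι] (e : ι → ℤ)
    (m : ι → ℕ) {i₀ : ι} (hm : 0 < m i₀) (j : ι) :
    e i₀ - e j ≤ ∑ l ∈ univ.erase j, m l • max (e l - e j) 0 := by
  have hnonneg : ∀ l ∈ univ.erase j, 0 ≤ m l • max (e l - e j) 0 :=
    fun l _ => nsmul_nonneg (le_max_right _ _) _
  rcases eq_or_ne i₀ j with rfl | hi₀
  · simpa using sum_nonneg hnonneg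
  · calc e i₀ - e j ≤ max (e i₀ - e j) 0 := le_max_left _ _
      _ ≤ m i₀ • max (e i₀ - e j) 0 := le_smul_of_one_le_left (le_max_right _ _) hm
      _ ≤ ∑ l ∈ univ.erase j, m l • max (e l - e j) 0 :=
        single_le_sum hnonneg (mem_erase.mpr ⟨hi₀, mem_univ i₀⟩)

/-- partial fraction degree bound.  Let `e₀ > e₁ > ⋯ > e_k` be integers,
`m_j ≥ 1`, and write `∏_j (1 - q^{e_j} z)^{-m_j} = ∑_j ∑_{i=1}^{m_j} C_{ij}(q) (1 - q^{e_j} z)^{-i}`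
(partial fractions in `z` over `ℚ(q)`).  Then each nonzero coefficient `C_{ij}(q)` has
maximal `q`-degree (`intDegree`) at most `e_j - e₀`. -/
theorem partial_fraction_coefficient_degree_bound (k : ℕ)
    (e : Fin (k + 1) → ℤ) (he : StrictAnti e)
    (m : Fin (k + 1) → ℕ) (hm : ∀ j, 0 < m j)
    (C : Fin (k + 1) → ℕ → RatFunc ℚ)
    (hdecomp :
      ∏ j : Fin (k + 1),
          ((1 - RatFunc.C ((RatFunc.X : RatFunc ℚ) ^ (e j)) * (RatFunc.X : RatFunc (RatFunc ℚ))) ^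
              (m j))⁻¹ =
        ∑ j : Fin (k + 1), ∑ i ∈ Finset.range (m j),
          RatFunc.C (C j i) *
            ((1 - RatFunc.C ((RatFunc.X : RatFunc ℚ) ^ (e j)) *
                (RatFunc.X : RatFunc (RatFunc ℚ)))⁻¹) ^ (i + 1)) :
    ∀ (j : Fin (k + 1)) (i : ℕ), i < m j → C j i ≠ 0 →
      (C j i).intDegree ≤ e j - e 0 := by
  classical
  intro j i hi hC
  have hne : ∀ l ≠ j, e l - e j ≠ 0 := fun l hl => sub_ne_zero.mpr (he.injective.ne hl)
  have hexp := congrArg (RatFunc.expandAround _ (zpow_ne_zero (-e j) RatFunc.X_ne_zero)) hdecomp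
  simp only [map_prod, map_inv₀, map_pow, map_sum, map_mul, RatFunc.expandAround_C,
    RatFunc.expandAround_X_zpow_neg_one_sub_C_X_zpow_mul_X] at hexp
  have hcoeff := coeff_prod_erase_inv_pow_eq_of_partialFraction j _ (by simp)
    (fun l hl => by simpa using RatFunc.one_sub_X_zpow_ne_zero (hne l hl)) m C hexp hi
  have hbound : RatFunc.inftyValuation ℚ (C j i) ≤ WithZero.exp (e j - e 0) := by
    rw [← hcoeff]
    refine (valuation_coeff_prod_le _ _ (fun l hl => valuation_coeff_pow_le _
      (RatFunc.inftyValuation_coeff_inv_C_one_sub_X_zpow_add_le (F := ℚ)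
        (hne l (ne_of_mem_erase hl))) (m l)) _).trans ?_
    simp only [← WithZero.exp_nsmul, ← WithZero.exp_sum, WithZero.exp_le_exp, smul_neg,
      sum_neg_distrib]
    linarith [sub_le_sum_erase_nsmul_max_sub e m (hm 0) j]
  rwa [RatFunc.inftyValuation_apply, RatFunc.inftyValuation_of_nonzero ℚ hC,
    WithZero.exp_le_exp] at hbound
end

section
/- Morton-type a-degree bound for the 1-colored HOMFLY polynomial of the (2,c) torus link, c ≥ 1: the maximal degree in a of P₁(T(2,c); a, q) equals (1/2)(−c + 2), i.e. the upper bound (r/2)(−c₊ + c₋ + s₊ + s₋) with r = 1, c₊ = c, c₋ = 0, s₊ + s₋ = 2 is attained. -/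
/-- The `p`-Pochhammer symbol `(x;p)_n = ∏_{j=0}^{n-1} (1 - x p^j)`. -/
noncomputable def qPoch {K : Type*} [Field K] (x p : K) (n : ℕ) : K :=
  ∏ j ∈ Finset.range n, (1 - x * p ^ j)

/-- The explicit formula for the unreduced `r`-colored HOMFLY polynomial of the
`(2,c)` torus link, written in the variables `A = a^(1/2)` and `Q = q^(1/2)`:
`P_r(T(2,c);a,q) = (q^{r(r-1)/2} a^{r/2})^{-c} ∑_{k=0}^{r} q^{c((r-k)²-k)/2} (-1)^{c(r-k)}
a^r q^{-k-r} (qa⁻¹;q⁻¹)_k (a⁻¹;q⁻¹)_{2r-k} /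
[(q⁻¹;q⁻¹)_k (q⁻¹;q⁻¹)_{2(r-k)} (q^{-2(r-k+1)};q⁻¹)_k]`, where `a = A²`, `q = Q²`. -/
noncomputable def torusHOMFLY {K : Type*} [Field K] (A Q : K) (r : ℕ) (c : ℤ) : K :=
  (Q ^ ((r : ℤ) * ((r : ℤ) - 1)) * A ^ (r : ℤ)) ^ (-c) *
    ∑ k ∈ Finset.range (r + 1),
      Q ^ (c * (((r : ℤ) - (k : ℤ)) ^ 2 - (k : ℤ))) * (-1 : K) ^ (c * ((r : ℤ) - (k : ℤ))) *
        A ^ (2 * (r : ℤ)) * Q ^ (2 * (-(k : ℤ) - (r : ℤ))) *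
        qPoch (Q ^ 2 * (A ^ 2)⁻¹) ((Q ^ 2)⁻¹) k * qPoch ((A ^ 2)⁻¹) ((Q ^ 2)⁻¹) (2 * r - k) /
        (qPoch ((Q ^ 2)⁻¹) ((Q ^ 2)⁻¹) k * qPoch ((Q ^ 2)⁻¹) ((Q ^ 2)⁻¹) (2 * (r - k)) *
          qPoch ((Q ^ 2) ^ (-2 * ((r : ℤ) - (k : ℤ) + 1))) ((Q ^ 2)⁻¹) k)


/-!
For `r = 1` the two summands `k = 0, 1` combine to
`A^(-c-2) (A² - 1) (α A² - β) / ((1 - Q⁻²)(1 - Q⁻⁴))` with `α = (-1)^c Q^(c-2) + Q^(-c-4)`,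
so the `A`-degree is `-c - 2 + 2 + 2` as soon as `α ≠ 0`. For `Q` transcendental the two
monomials of `α` have different `Q`-degrees unless `c = -1`, so they cannot cancel.
-/

namespace RatFunc

variable {K : Type*} [Field K]

theorem intDegree_pow (x : RatFunc K) (n : ℕ) : (x ^ n).intDegree = n * x.intDegree := by
  rcases eq_or_ne x 0 with rfl | hx
  · rcases n with _ | n <;> simp
  induction n with
  | zero => simp
  | succ n ih =>
    rw [pow_succ, intDegree_mul (pow_ne_zero n hx) hx, ih]
    push_cast
    ring

theorem intDegree_zpow (x : RatFunc K) (n : ℤ) : (x ^ n).intDegree = n * x.intDegree := by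
  obtain ⟨n, rfl | rfl⟩ := Int.eq_nat_or_neg n <;> simp [intDegree_pow]

theorem intDegree_C_mul_X_sq_sub_C {a : K} (ha : a ≠ 0) (b : K) :
    (C a * X ^ 2 - C b : RatFunc K).intDegree = 2 := by
  have h : (C a * X ^ 2 - C b : RatFunc K) =
      algebraMap (Polynomial K) (RatFunc K) (Polynomial.C a * Polynomial.X ^ 2 - Polynomial.C b) := by
    simp
  rw [h, intDegree_polynomial]
  norm_cast
  compute_degree!

theorem add_ne_zero_of_intDegree_ne {x y : RatFunc K} (h : x.intDegree ≠ y.intDegree) :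
    x + y ≠ 0 :=
  fun hxy => h (by rw [eq_neg_of_add_eq_zero_left hxy, intDegree_neg])

end RatFunc

open RatFunc

theorem torusHOMFLY_one {K : Type*} [Field K] {A Q : K} (hA : A ≠ 0) (hQ : Q ≠ 0) (c : ℤ) :
    torusHOMFLY A Q 1 c =
      A ^ (-c - 2) * (A ^ 2 - 1) *
          (((-1) ^ c * Q ^ (c - 2) + Q ^ (-c - 4)) * A ^ 2 - ((-1) ^ c * Q ^ (c - 4) + Q ^ (-c - 2))) /
        ((1 - Q ^ (-2 : ℤ)) * (1 - Q ^ (-4 : ℤ))) := by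
  simp only [torusHOMFLY, qPoch, Finset.sum_range_succ, Finset.prod_range_succ,
    Finset.sum_range_zero, Finset.prod_range_zero]
  norm_num [zpow_sub₀ hA, zpow_sub₀ hQ, zpow_neg]
  field_simp
  ring

theorem intDegree_torusHOMFLY_one {K : Type*} [Field K] (c : ℤ) {q : K} (hq : q ≠ 0)
    (hden : (1 - q ^ (-2 : ℤ)) * (1 - q ^ (-4 : ℤ)) ≠ 0)
    (hlead : (-1) ^ c * q ^ (c - 2) + q ^ (-c - 4) ≠ 0) :
    (torusHOMFLY X (C q) 1 c).intDegree = -c + 2 := by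
  have h := torusHOMFLY_one (X_ne_zero (K := K)) ((map_ne_zero C).2 hq) c
  simp only [← map_zpow₀, ← map_neg, ← map_one C, ← map_mul, ← map_add, ← map_sub] at h
  rw [h, map_one]
  have hdeg₁ : (X ^ 2 - 1 : RatFunc K).intDegree = 2 := by
    simpa using intDegree_C_mul_X_sq_sub_C (one_ne_zero (α := K)) 1
  have hdeg₂ := intDegree_C_mul_X_sq_sub_C hlead ((-1) ^ c * q ^ (c - 4) + q ^ (-c - 2))
  have hne {f : RatFunc K} (hf : f.intDegree = 2) : f ≠ 0 := by rintro rfl; simp at hf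
  have hX : (X : RatFunc K) ^ (-c - 2) ≠ 0 := zpow_ne_zero _ X_ne_zero
  have hnum := mul_ne_zero (mul_ne_zero hX (hne hdeg₁)) (hne hdeg₂)
  rw [intDegree_div hnum ((map_ne_zero C).2 hden),
    intDegree_mul (mul_ne_zero hX (hne hdeg₁)) (hne hdeg₂), intDegree_mul hX (hne hdeg₁),
    hdeg₁, hdeg₂, intDegree_zpow, intDegree_X, intDegree_C]
  ring

/-- Morton-type `a`-degree bound for the `1`-colored HOMFLY polynomial of
the `(2,c)` torus link, `c ≥ 1`: the maximal `a`-degree of `P₁(T(2,c);a,q)` equals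
`(1/2)(-c+2)`, i.e. the degree in `A = a^(1/2)` (outer variable, with coefficients in
`ℚ(Q)`) equals `-c + 2`, attaining the bound `(r/2)(-c₊+c₋+s₊+s₋)`. -/
theorem torus_two_braid_a_degree (c : ℤ) (hc : 1 ≤ c) :
    (torusHOMFLY (RatFunc.X : RatFunc (RatFunc ℚ)) (RatFunc.C (RatFunc.X : RatFunc ℚ)) 1
        c).intDegree = -c + 2 := by
  have hone_sub {n : ℤ} (hn : n ≠ 0) : (1 : RatFunc ℚ) - X ^ n ≠ 0 :=
    sub_ne_zero.2 (mt (congrArg intDegree) (by simpa [intDegree_zpow] using hn.symm))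
  have hsign : ((-1 : RatFunc ℚ) ^ c).intDegree = 0 := by
    simp [intDegree_zpow]
  have hlead : (-1) ^ c * X ^ (c - 2) + X ^ (-c - 4) ≠ (0 : RatFunc ℚ) := by
    apply add_ne_zero_of_intDegree_ne
    rw [intDegree_mul (zpow_ne_zero _ (by norm_num)) (zpow_ne_zero _ X_ne_zero), hsign,
      intDegree_zpow, intDegree_zpow, intDegree_X]
    omega
  exact intDegree_torusHOMFLY_one c X_ne_zero
    (mul_ne_zero (hone_sub (by norm_num)) (hone_sub (by norm_num))) hlead
end
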